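/- arXiv:1808.10005 — 12 statements merged into one kernel-verified Lean document; each statement's English description precedes it below -/
import Mathlib

section
/- Let M : Fin n → Fin m → Bool. Define a directed graph H on Fin n ⊕ Fin m with edges: inl i → inl i' whenever i < i'; inr p → inr p' whenever p < p'; inl i → inr p whenever M i p = true (constraint C1); and inr p → inl j whenever there exist i < j and q > p with M i p = true, M j p = false, and M j q = true (constraint C2). If H is acyclic (its edge relation has no directed cycle), then there exists a Stick order for M, i.e., strictly monotone ra : Fin n → ℕ and rb : Fin m → ℕ with disjoint ranges such that for all j, p: M j p = true ↔ (ra j < rb p ∧ (∃ q ≥ p, M j q = true) ∧ (∃ i ≤ j, M i p = true)). -/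
def StickOrder {n m : ℕ} (M : Fin n → Fin m → Bool) : Prop :=
  ∃ (ra : Fin n → ℕ) (rb : Fin m → ℕ),
    StrictMono ra ∧ StrictMono rb ∧ (∀ i p, ra i ≠ rb p) ∧
    ∀ j p, M j p = true ↔
      (ra j < rb p ∧ (∃ q, p ≤ q ∧ M j q = true) ∧ (∃ i, i ≤ j ∧ M i p = true))

def HEdge {n m : ℕ} (M : Fin n → Fin m → Bool) :
    Fin n ⊕ Fin m → Fin n ⊕ Fin m → Prop
  | Sum.inl i, Sum.inl i' => i < i'
  | Sum.inr p, Sum.inr p' => p < p'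
  | Sum.inl i, Sum.inr p => M i p = true
  | Sum.inr p, Sum.inl j =>
      ∃ i, i < j ∧ ∃ q, p < q ∧ M i p = true ∧ M j p = false ∧ M j q = true

def P1 {n m : ℕ} (M : Fin n → Fin m → Bool) : Prop :=
  ∃ i j k : Fin n, i < j ∧ j < k ∧ ∃ p q r : Fin m, p < q ∧ q < r ∧
    M i q = true ∧ M j q = false ∧ M j r = true ∧ M k p = true

def P2 {n m : ℕ} (M : Fin n → Fin m → Bool) : Prop :=
  ∃ i j k : Fin n, i < j ∧ j < k ∧ ∃ p q : Fin m, p < q ∧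
    M i p = true ∧ M j p = false ∧ M j q = true ∧ M k p = true

def P3 {n m : ℕ} (M : Fin n → Fin m → Bool) : Prop :=
  ∃ i j : Fin n, i < j ∧ ∃ p q r : Fin m, p < q ∧ q < r ∧
    M i q = true ∧ M j p = true ∧ M j q = false ∧ M j r = true


/-!
An acyclic relation on a finite type admits an injective ranking into `ℕ` that increases along
every edge: rank by the number of strict predecessors, breaking ties with an enumeration of the
type. Applied to `H`, the edges `inl i → inr p` give `ra j < rb p` whenever `M j p`, and the
constraint-C2 edges `inr p → inl j` give `rb p < ra j` exactly when `M j p` fails although `j` has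
a one at or after column `p` and column `p` has a one at or above row `j`.
-/

open Relation Finset

namespace Relation

variable {α : Type*} [Fintype α] {r : α → α → Prop}

theorem card_transGen_predecessors_lt [DecidableRel (TransGen r)]
    (hirr : ∀ a, ¬ TransGen r a a) {a b : α} (hab : r a b) :
    #{w | TransGen r w a} < #{w | TransGen r w b} := by
  refine card_lt_card ⟨fun w hw => ?_, fun hsub => ?_⟩
  · simp only [mem_filter, mem_univ, true_and] at hw ⊢
    exact hw.tail hab
  · have : a ∈ ({w | TransGen r w b} : Finset α) := by simpa using TransGen.single hab
    exact hirr a (by simpa using hsub this)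

theorem exists_injective_nat_increasing_of_acyclic (hirr : ∀ a, ¬ TransGen r a a) :
    ∃ f : α → ℕ, Function.Injective f ∧ ∀ a b, r a b → f a < f b := by
  classical
  let N := Fintype.card α
  let e := Fintype.equivFin α
  let depth : α → ℕ := fun v => #{w | TransGen r w v}
  refine ⟨fun v => depth v * N + e v, fun a b hab => ?_, fun a b hab => ?_⟩
  · have hmod : (depth a * N + e a) % N = (depth b * N + e b) % N := congrArg (· % N) hab
    rw [Nat.mul_add_mod_of_lt (e a).isLt, Nat.mul_add_mod_of_lt (e b).isLt] at hmod
    exact e.injective (Fin.ext hmod)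
  · have hdepth : depth a + 1 ≤ depth b := card_transGen_predecessors_lt hirr hab
    calc depth a * N + e a
        < depth a * N + N := Nat.add_lt_add_left (e a).isLt _
      _ = (depth a + 1) * N := by ring
      _ ≤ depth b * N := Nat.mul_le_mul_right N hdepth
      _ ≤ depth b * N + e b := Nat.le_add_right _ _

end Relation

theorem hEdge_inr_inl {n m : ℕ} {M : Fin n → Fin m → Bool} {i j : Fin n} {p q : Fin m}
    (hij : i ≤ j) (hpq : p ≤ q) (hip : M i p = true) (hjq : M j q = true)
    (hjp : M j p = false) : HEdge M (Sum.inr p) (Sum.inl j) := by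
  have hij' : i < j := hij.lt_of_ne (by rintro rfl; simp_all)
  have hpq' : p < q := hpq.lt_of_ne (by rintro rfl; simp_all)
  exact ⟨i, hij', q, hpq', hip, hjp, hjq⟩

theorem stmt_1 {n m : ℕ} (M : Fin n → Fin m → Bool)
    (hacyc : ¬ ∃ v, Relation.TransGen (HEdge M) v v) :
    StickOrder M := by
  obtain ⟨f, hinj, hf⟩ := exists_injective_nat_increasing_of_acyclic fun v hv => hacyc ⟨v, hv⟩
  refine ⟨f ∘ Sum.inl, f ∘ Sum.inr, fun i i' h => hf _ _ h, fun p p' h => hf _ _ h,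
    fun i p h => Sum.inl_ne_inr (hinj h), fun j p => ⟨fun h => ?_, ?_⟩⟩
  · exact ⟨hf _ (Sum.inr p) h, ⟨p, le_rfl, h⟩, ⟨j, le_rfl, h⟩⟩
  · rintro ⟨hlt, ⟨q, hpq, hjq⟩, ⟨i, hij, hip⟩⟩
    by_contra hjp
    have hedge := hEdge_inr_inl hij hpq hip hjq (Bool.eq_false_iff.mpr hjp)
    exact (hf _ _ hedge).not_gt hlt
end

section
/- Let M : Fin n → Fin m → Bool and let H be the constraint digraph on Fin n ⊕ Fin m with edges inl i → inl i' for i < i', inr p → inr p' for p < p', inl i → inr p when M i p = true, and inr p → inl j when ∃ i < j, ∃ q > p, M i p = true ∧ M j p = false ∧ M j q = true. If there exists a Stick order for M (strictly monotone ra : Fin n → ℕ, rb : Fin m → ℕ with disjoint ranges such that ∀ j p, M j p = true ↔ (ra j < rb p ∧ (∃ q ≥ p, M j q = true) ∧ (∃ i ≤ j, M i p = true))), then H is acyclic. -/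
/-
A Stick order is a potential: merging the ranks `ra` and `rb` into one function on
`Fin n ⊕ Fin m`, every edge of `H` strictly increases it, so no closed walk exists. The only
nontrivial edges are `inr p → inl j`: there `M j p = false` while both other conditions of the
Stick characterisation hold, so `ra j < rb p` must fail, and disjointness of the ranges gives
`rb p < ra j`.
-/

theorem Relation.not_transGen_self_of_lt {α β : Type*} [Preorder β] {r : α → α → Prop}
    (f : α → β) (hf : ∀ a b, r a b → f a < f b) (a : α) : ¬ Relation.TransGen r a a := by
  intro h
  have hlt : Relation.TransGen (· < ·) (f a) (f a) := Relation.TransGen.lift f hf _ _ h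
  rw [Relation.transGen_eq_self] at hlt
  exact lt_irrefl _ hlt

theorem StickOrder.exists_lt_of_hEdge {n m : ℕ} {M : Fin n → Fin m → Bool} (h : StickOrder M) :
    ∃ f : Fin n ⊕ Fin m → ℕ, ∀ a b, HEdge M a b → f a < f b := by
  obtain ⟨ra, rb, hra, hrb, hne, hM⟩ := h
  refine ⟨Sum.elim ra rb, ?_⟩
  rintro (i | p) (j | q) hE
  · exact hra hE
  · exact ((hM i q).mp hE).1
  · obtain ⟨i, hij, q, hpq, hip, hjp, hjq⟩ := hE
    have hnot : ¬ ra j < rb p := fun hlt =>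
      absurd ((hM j p).mpr ⟨hlt, ⟨q, hpq.le, hjq⟩, ⟨i, hij.le, hip⟩⟩) (by simp [hjp])
    exact lt_of_le_of_ne (not_lt.mp hnot) (hne j p).symm
  · exact hrb hE

theorem stmt_2 {n m : ℕ} (M : Fin n → Fin m → Bool)
    (h : StickOrder M) :
    ¬ ∃ v, Relation.TransGen (HEdge M) v v := by
  rintro ⟨v, hv⟩
  obtain ⟨f, hf⟩ := h.exists_lt_of_hEdge
  exact Relation.not_transGen_self_of_lt f hf v hv
end

section
/- Let M : Fin n → Fin m → Bool. Say M contains pattern P3 if there exist rows i < j and columns p < q < r with M i q = true, M j p = true, M j q = false, and M j r = true. If M contains pattern P3, then there is no Stick order for M, i.e., there are no strictly monotone ra : Fin n → ℕ and rb : Fin m → ℕ with disjoint ranges such that ∀ j p, M j p = true ↔ (ra j < rb p ∧ (∃ q ≥ p, M j q = true) ∧ (∃ i ≤ j, M i p = true)). -/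
/-!
A Stick order puts `ra j < rb p` for every one-entry `(j, p)`. At a zero-entry `(j, q)` that has
a one to its right in row `j` and a one above it in column `q`, the first conjunct of the Stick
condition must fail, so `rb q < ra j` (the ranges are disjoint). Pattern P3 then gives
`rb q < ra j < rb p < rb q`.
-/

section StickRanks

variable {n m : ℕ} {M : Fin n → Fin m → Bool} {ra : Fin n → ℕ} {rb : Fin m → ℕ}

theorem stick_rank_lt_of_true
    (hM : ∀ j p, M j p = true ↔
      (ra j < rb p ∧ (∃ q, p ≤ q ∧ M j q = true) ∧ (∃ i, i ≤ j ∧ M i p = true)))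
    {j : Fin n} {p : Fin m} (hjp : M j p = true) : ra j < rb p :=
  ((hM j p).1 hjp).1

theorem stick_rank_lt_of_false (hdisj : ∀ i p, ra i ≠ rb p)
    (hM : ∀ j p, M j p = true ↔
      (ra j < rb p ∧ (∃ q, p ≤ q ∧ M j q = true) ∧ (∃ i, i ≤ j ∧ M i p = true)))
    {i j : Fin n} {q r : Fin m} (hjq : M j q = false) (hqr : q ≤ r) (hjr : M j r = true)
    (hij : i ≤ j) (hiq : M i q = true) : rb q < ra j := by
  have hnot : ¬ ra j < rb q := fun hlt => by
    simpa [hjq] using (hM j q).2 ⟨hlt, ⟨r, hqr, hjr⟩, ⟨i, hij, hiq⟩⟩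
  exact lt_of_le_of_ne (not_lt.1 hnot) (hdisj j q).symm

end StickRanks

theorem stmt_4 {n m : ℕ} (M : Fin n → Fin m → Bool)
    (h : P3 M) :
    ¬ StickOrder M := by
  rintro ⟨ra, rb, -, hrb, hdisj, hM⟩
  obtain ⟨i, j, hij, p, q, r, hpq, hqr, hiq, hjp, hjq, hjr⟩ := h
  have hqj : rb q < ra j := stick_rank_lt_of_false hdisj hM hjq hqr.le hjr hij.le hiq
  have hjp' : ra j < rb p := stick_rank_lt_of_true hM hjp
  exact (hqj.trans (hjp'.trans (hrb hpq))).false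
end

section
/- Let M : Fin n → Fin m → Bool. Say M contains pattern P1 if there exist rows i < j < k and columns p < q < r with M i q = true, M j q = false, M j r = true, and M k p = true. If M contains pattern P1, then there is no Stick order for M (no strictly monotone ra : Fin n → ℕ, rb : Fin m → ℕ with disjoint ranges satisfying the intersection equivalence ∀ j p, M j p = true ↔ (ra j < rb p ∧ (∃ q ≥ p, M j q = true) ∧ (∃ i ≤ j, M i p = true))). -/
theorem stmt_5 {n m : ℕ} (M : Fin n → Fin m → Bool)
    (h : P1 M) :
    ¬ StickOrder M := by
  rintro ⟨ra, rb, hra, hrb, hne, hiff⟩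
  obtain ⟨i, j, k, hij, hjk, p, q, r, hpq, hqr, hiq, hjq, hjr, hkp⟩ := h
  -- rb q ≤ ra j since M j q = false but the other two conjuncts hold
  have h1 : ¬ (ra j < rb q) := by
    intro hlt
    have : M j q = true := (hiff j q).2 ⟨hlt, ⟨r, le_of_lt hqr, hjr⟩, ⟨i, le_of_lt hij, hiq⟩⟩
    simp [this] at hjq
  have h2 : rb q < ra j := lt_of_le_of_ne (not_lt.1 h1) (fun e => hne j q e.symm)
  have h3 : ra k < rb p := ((hiff k p).1 hkp).1
  have h4 : rb p < rb q := hrb hpq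
  have h5 : ra j < ra k := hra hjk
  omega
end

section
/- Let M : Fin n → Fin m → Bool and let H be the constraint digraph on Fin n ⊕ Fin m (edges: inl i → inl i' for i < i'; inr p → inr p' for p < p'; inl i → inr p when M i p = true; inr p → inl j when ∃ i < j, ∃ q > p, M i p = true ∧ M j p = false ∧ M j q = true). If H contains a directed cycle, then M contains at least one of the patterns: P1 (∃ i<j<k, p<q<r: M i q ∧ ¬M j q ∧ M j r ∧ M k p), P2 (∃ i<j<k, p<q: M i p ∧ ¬M j p ∧ M j q ∧ M k p), or P3 (∃ i<j, p<q<r: M i q ∧ M j p ∧ ¬M j q ∧ M j r). -/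
theorem stmt_6 {n m : ℕ} (M : Fin n → Fin m → Bool)
    (h : ∃ v, Relation.TransGen (HEdge M) v v) :
    P1 M ∨ P2 M ∨ P3 M := by
  by_contra hcon
  push_neg at hcon
  obtain ⟨hP1, hP23⟩ := hcon
  obtain ⟨hP2, hP3⟩ := hP23
  -- Key pattern-extraction lemma
  have key : ∀ (p : Fin m) (j : Fin n), HEdge M (Sum.inr p) (Sum.inl j) →
      ∀ (d : Fin n) (e : Fin m), j ≤ d → M d e = true → p < e := by
    rintro p j ⟨i, hij, q, hpq, hip, hjp, hjq⟩ d e hjd hde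
    by_contra hle
    push_neg at hle
    rcases eq_or_lt_of_le hjd with rfl | hjd'
    · have hep : e < p := lt_of_le_of_ne hle (by rintro rfl; rw [hde] at hjp; exact Bool.noConfusion hjp)
      exact hP3 ⟨i, j, hij, e, p, q, hep, hpq, hip, hde, hjp, hjq⟩
    · rcases eq_or_lt_of_le hle with rfl | hep
      · exact hP2 ⟨i, j, d, hij, hjd', e, q, hpq, hip, hjp, hjq, hde⟩
      · exact hP1 ⟨i, j, d, hij, hjd', e, p, q, hep, hpq, hip, hjp, hjq, hde⟩
  -- the "first useful column" function
  set S : Fin n → Set ℕ := fun j =>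
    {x | x = m ∨ ∃ p : Fin m, (p : ℕ) = x ∧ ∃ d, j ≤ d ∧ M d p = true} with hS
  have hSne : ∀ j, (S j).Nonempty := fun j => ⟨m, Or.inl rfl⟩
  set c : Fin n → ℕ := fun j => sInf (S j) with hc
  have hmem : ∀ j, c j ∈ S j := fun j => Nat.sInf_mem (hSne j)
  have hmono : ∀ j j' : Fin n, j ≤ j' → c j ≤ c j' := by
    intro j j' hjj
    apply Nat.sInf_le
    rcases hmem j' with h0 | ⟨p, hpx, d, hd, hme⟩
    · exact Or.inl h0
    · exact Or.inr ⟨p, hpx, d, le_trans hjj hd, hme⟩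
  have hle : ∀ (i : Fin n) (p : Fin m), M i p = true → c i ≤ (p : ℕ) :=
    fun i p hip => Nat.sInf_le (Or.inr ⟨p, rfl, i, le_refl i, hip⟩)
  have hgt : ∀ (p : Fin m) (j : Fin n), HEdge M (Sum.inr p) (Sum.inl j) →
      (p : ℕ) < c j := by
    intro p j he
    rcases hmem j with h0 | ⟨p', hpx, d, hd, hme⟩
    · rw [h0]; exact p.isLt
    · rw [← hpx]; exact key p j he d p' hd hme
  -- rank function
  set f : Fin n ⊕ Fin m → ℕ := fun v =>
    match v with
    | Sum.inl i => 2 * c i * (n + 1) + (i : ℕ)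
    | Sum.inr p => (2 * (p : ℕ) + 1) * (n + 1) with hf
  have hstep : ∀ v w, HEdge M v w → f v < f w := by
    rintro (i | p) (i' | p') he
    · have h1 : c i ≤ c i' := hmono i i' (le_of_lt he)
      have h2 : 2 * c i * (n + 1) ≤ 2 * c i' * (n + 1) :=
        Nat.mul_le_mul_right _ (by omega)
      have h3 : (i : ℕ) < (i' : ℕ) := he
      simp only [hf]
      omega
    · have h1 : c i ≤ (p' : ℕ) := hle i p' he
      have h2 : 2 * c i * (n + 1) ≤ 2 * (p' : ℕ) * (n + 1) :=
        Nat.mul_le_mul_right _ (by omega)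
      have h3 : (2 * (p' : ℕ) + 1) * (n + 1) = 2 * (p' : ℕ) * (n + 1) + (n + 1) := by ring
      have h4 : (i : ℕ) < n := i.isLt
      simp only [hf]
      omega
    · have h1 : (p : ℕ) < c i' := hgt p i' he
      have h2 : (2 * (p : ℕ) + 2) * (n + 1) ≤ 2 * c i' * (n + 1) :=
        Nat.mul_le_mul_right _ (by omega)
      have h3 : (2 * (p : ℕ) + 1) * (n + 1) < (2 * (p : ℕ) + 2) * (n + 1) :=
        Nat.mul_lt_mul_of_lt_of_le (by omega) (le_refl _) (by omega)
      simp only [hf]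
      omega
    · have h1 : (p : ℕ) < (p' : ℕ) := he
      have h2 : (2 * (p : ℕ) + 1) * (n + 1) < (2 * (p' : ℕ) + 1) * (n + 1) :=
        Nat.mul_lt_mul_of_lt_of_le (by omega) (le_refl _) (by omega)
      simp only [hf]
      omega
  obtain ⟨v, hv⟩ := h
  have : ∀ w, Relation.TransGen (HEdge M) v w → f v < f w := by
    intro w hw
    induction hw with
    | single he => exact hstep _ _ he
    | tail _ he ih => exact lt_trans ih (hstep _ _ he)
  exact lt_irrefl _ (this v hv)
end

section
/- Forbidden submatrix characterization (fixed row and column orders): Let M : Fin n → Fin m → Bool. There exists a Stick order for M (strictly monotone ra : Fin n → ℕ, rb : Fin m → ℕ with disjoint ranges such that ∀ j p, M j p = true ↔ (ra j < rb p ∧ (∃ q ≥ p, M j q = true) ∧ (∃ i ≤ j, M i p = true))) if and only if M contains none of the patterns P1 (∃ i<j<k rows, p<q<r cols: M i q = true, M j q = false, M j r = true, M k p = true), P2 (∃ i<j<k rows, p<q cols: M i p = true, M j p = false, M j q = true, M k p = true), and P3 (∃ i<j rows, p<q<r cols: M i q = true, M j p = true, M j q = false, M j r = true). -/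
-- S p : set of (row indices of) rows j that must come after column p' for some p' ≥ p
def gset {n m : ℕ} (M : Fin n → Fin m → Bool) (p : Fin m) : Set ℕ :=
  {x | ∃ p' : Fin m, p ≤ p' ∧ ∃ j : Fin n, (j : ℕ) = x ∧ M j p' = false ∧
      (∃ q, p' ≤ q ∧ M j q = true) ∧ (∃ i, i ≤ j ∧ M i p' = true)} ∪ {n}

noncomputable def gfun {n m : ℕ} (M : Fin n → Fin m → Bool) (p : Fin m) : ℕ :=
  sInf (gset M p)

lemma gfun_mono {n m : ℕ} (M : Fin n → Fin m → Bool) {p p' : Fin m} (h : p ≤ p') :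
    gfun M p ≤ gfun M p' := by
  have hne : (gset M p').Nonempty := ⟨n, Or.inr rfl⟩
  have hmem := Nat.sInf_mem hne
  apply Nat.sInf_le
  rcases hmem with ⟨p'', hp'', rest⟩ | hmem
  · exact Or.inl ⟨p'', le_trans h hp'', rest⟩
  · exact Or.inr hmem

lemma gfun_le {n m : ℕ} (M : Fin n → Fin m → Bool) {p : Fin m} {j : Fin n}
    (h : M j p = false) (hA : ∃ q, p ≤ q ∧ M j q = true) (hB : ∃ i, i ≤ j ∧ M i p = true) :
    gfun M p ≤ (j : ℕ) :=
  Nat.sInf_le (Or.inl ⟨p, le_refl p, j, rfl, h, hA, hB⟩)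

lemma lt_gfun {n m : ℕ} (M : Fin n → Fin m → Bool)
    (h1 : ¬ P1 M) (h2 : ¬ P2 M) (h3 : ¬ P3 M) {p : Fin m} {j : Fin n}
    (h : M j p = true) : (j : ℕ) < gfun M p := by
  have hne : (gset M p).Nonempty := ⟨n, Or.inr rfl⟩
  have hmem := Nat.sInf_mem hne
  rcases hmem with ⟨p', hpp', j', hj', hMf, ⟨q, hq, hMq⟩, ⟨i, hi, hMi⟩⟩ | hmem
  · rw [gfun, ← hj']
    by_contra hcon
    push_neg at hcon
    -- hcon : (j' : ℕ) ≤ j, want contradiction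
    have hij' : i < j' := by
      rcases lt_or_eq_of_le hi with h' | h'
      · exact h'
      · rw [h'] at hMi; rw [hMi] at hMf; exact absurd hMf (by simp)
    have hpq : p' < q := by
      rcases lt_or_eq_of_le hq with h' | h'
      · exact h'
      · rw [← h'] at hMq; rw [hMq] at hMf; exact absurd hMf (by simp)
    rcases lt_or_eq_of_le hpp' with hpp | hpp
    · rcases lt_or_eq_of_le hcon with hjj | hjj
      · -- j' < j, p < p' : pattern P1
        exact h1 ⟨i, j', j, hij', hjj, p, p', q, hpp, hpq, hMi, hMf, hMq, h⟩
      · -- j' = j, p < p' : pattern P3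
        have hj'j : j' = j := Fin.ext hjj
        subst hj'j
        exact h3 ⟨i, j', hij', p, p', q, hpp, hpq, hMi, h, hMf, hMq⟩
    · subst hpp
      rcases lt_or_eq_of_le hcon with hjj | hjj
      · -- j' < j, p' = p : pattern P2
        exact h2 ⟨i, j', j, hij', hjj, p, q, hpq, hMi, hMf, hMq, h⟩
      · have hj'j : j' = j := Fin.ext hjj
        subst hj'j
        rw [h] at hMf; exact absurd hMf (by simp)
  · simp only [Set.mem_singleton_iff] at hmem
    rw [gfun, hmem]
    exact j.isLt
noncomputable def cfun {n m : ℕ} (M : Fin n → Fin m → Bool) (j : Fin n) : ℕ :=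
  (Finset.univ.filter (fun p : Fin m => gfun M p ≤ (j : ℕ))).card

lemma cfun_mono {n m : ℕ} (M : Fin n → Fin m → Bool) {j j' : Fin n} (h : j ≤ j') :
    cfun M j ≤ cfun M j' := by
  apply Finset.card_le_card
  intro p hp
  simp only [Finset.mem_filter, Finset.mem_univ, true_and] at hp ⊢
  exact le_trans hp h

lemma cfun_le {n m : ℕ} (M : Fin n → Fin m → Bool) {j : Fin n} {p : Fin m}
    (h : (j : ℕ) < gfun M p) : cfun M j ≤ (p : ℕ) := by
  have : (Finset.univ.filter (fun p' : Fin m => gfun M p' ≤ (j : ℕ))) ⊆ Finset.Iio p := by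
    intro p' hp'
    simp only [Finset.mem_filter, Finset.mem_univ, true_and] at hp'
    simp only [Finset.mem_Iio]
    by_contra hc
    push_neg at hc
    exact absurd (le_trans (gfun_mono M hc) hp') (not_le.mpr h)
  calc cfun M j ≤ (Finset.Iio p).card := Finset.card_le_card this
    _ = (p : ℕ) := Fin.card_Iio p

lemma cfun_ge {n m : ℕ} (M : Fin n → Fin m → Bool) {j : Fin n} {p : Fin m}
    (h : gfun M p ≤ (j : ℕ)) : (p : ℕ) + 1 ≤ cfun M j := by
  have : Finset.Iic p ⊆ (Finset.univ.filter (fun p' : Fin m => gfun M p' ≤ (j : ℕ))) := by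
    intro p' hp'
    simp only [Finset.mem_Iic] at hp'
    simp only [Finset.mem_filter, Finset.mem_univ, true_and]
    exact le_trans (gfun_mono M hp') h
  calc (p : ℕ) + 1 = (Finset.Iic p).card := (Fin.card_Iic p).symm
    _ ≤ cfun M j := Finset.card_le_card this

lemma key_iff {n m : ℕ} (M : Fin n → Fin m → Bool) (j : Fin n) (p : Fin m) :
    2 * ((j : ℕ) + cfun M j) < 2 * (gfun M p + (p : ℕ)) + 1 ↔ (j : ℕ) < gfun M p := by
  constructor
  · intro h
    by_contra hc
    push_neg at hc
    have := cfun_ge M hc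
    omega
  · intro h
    have := cfun_le M h
    omega
theorem stmt_7 {n m : ℕ} (M : Fin n → Fin m → Bool) :
    StickOrder M ↔ (¬ P1 M ∧ ¬ P2 M ∧ ¬ P3 M) := by
  constructor
  · rintro ⟨ra, rb, hra, hrb, hne, hM⟩
    have key : ∀ j p, M j p = false → (∃ q, p ≤ q ∧ M j q = true) →
        (∃ i, i ≤ j ∧ M i p = true) → rb p < ra j := by
      intro j p h hA hB
      have h1 : ¬ (ra j < rb p) := by
        intro hlt
        have := (hM j p).mpr ⟨hlt, hA, hB⟩
        rw [h] at this; exact absurd this (by simp)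
      rcases lt_or_gt_of_ne (hne j p) with h2 | h2
      · exact absurd h2 h1
      · exact h2
    refine ⟨?_, ?_, ?_⟩
    · rintro ⟨i, j, k, hij, hjk, p, q, r, hpq, hqr, h1, h2, h3, h4⟩
      have e1 : rb q < ra j := key j q h2 ⟨r, hqr.le, h3⟩ ⟨i, hij.le, h1⟩
      have e2 : ra k < rb p := ((hM k p).mp h4).1
      have e3 : ra j < ra k := hra hjk
      have e4 : rb p < rb q := hrb hpq
      omega
    · rintro ⟨i, j, k, hij, hjk, p, q, hpq, h1, h2, h3, h4⟩
      have e1 : rb p < ra j := key j p h2 ⟨q, hpq.le, h3⟩ ⟨i, hij.le, h1⟩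
      have e2 : ra k < rb p := ((hM k p).mp h4).1
      have e3 : ra j < ra k := hra hjk
      omega
    · rintro ⟨i, j, hij, p, q, r, hpq, hqr, h1, h2, h3, h4⟩
      have e1 : rb q < ra j := key j q h3 ⟨r, hqr.le, h4⟩ ⟨i, hij.le, h1⟩
      have e2 : ra j < rb p := ((hM j p).mp h2).1
      have e3 : rb p < rb q := hrb hpq
      omega
  · rintro ⟨h1, h2, h3⟩
    refine ⟨fun j => 2 * ((j : ℕ) + cfun M j), fun p => 2 * (gfun M p + (p : ℕ)) + 1,
      ?_, ?_, ?_, ?_⟩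
    · intro j j' hjj
      have hc := cfun_mono M hjj.le
      have : (j : ℕ) < (j' : ℕ) := hjj
      show 2 * ((j : ℕ) + cfun M j) < 2 * ((j' : ℕ) + cfun M j')
      omega
    · intro p p' hpp
      have hg := gfun_mono M hpp.le
      have : (p : ℕ) < (p' : ℕ) := hpp
      show 2 * (gfun M p + (p : ℕ)) + 1 < 2 * (gfun M p' + (p' : ℕ)) + 1
      omega
    · intro i p
      show 2 * ((i : ℕ) + cfun M i) ≠ 2 * (gfun M p + (p : ℕ)) + 1
      omega
    · intro j p
      show M j p = true ↔ (2 * ((j : ℕ) + cfun M j) < 2 * (gfun M p + (p : ℕ)) + 1 ∧ _ ∧ _)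
      rw [key_iff]
      constructor
      · intro h
        exact ⟨lt_gfun M h1 h2 h3 h, ⟨p, le_refl p, h⟩, ⟨j, le_refl j, h⟩⟩
      · rintro ⟨hlt, hA, hB⟩
        by_contra hc
        have hf : M j p = false := by
          cases hMjp : M j p
          · rfl
          · exact absurd hMjp hc
        exact absurd hlt (not_lt.mpr (gfun_le M hf hA hB))
end

section
/- A bipartite graph is a Stick graph (for some vertex orderings) iff its matrix can be permuted to avoid P1, P2, P3: Let M : Fin n → Fin m → Bool. There exist permutations σ of Fin n and τ of Fin m and a Stick order for the permuted matrix M' i p := M (σ i) (τ p) if and only if there exist permutations σ, τ such that M' contains none of the patterns P1, P2, P3 (as defined via ordered index triples/pairs). -/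
/-!
A Stick order places row `j` at `ra j` and column `p` at `rb p` on a line, and its defining
equivalence forces an entry to be `1` as soon as it lies after its row's position, has a `1` weakly
to its right and a `1` weakly above it. Each of `P1`, `P2`, `P3` exhibits a `0` entry in exactly
that situation.

Conversely, orient the bipartite graph by `HEdge N`: rows and columns in their given order, a `1`
entry `(j, p)` as row `j` before column `p`, and a `0` entry `(j, p)` with a `1` above it and a `1`
to its right as column `p` before row `j`. Any injective topological numbering of this digraph is a
Stick order, so it suffices that the digraph is acyclic. Excluding the three patterns is exactly
what makes the following bound survive along every path: a path from row `j` to column `p` passes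
through a `1` entry weakly below `j` and weakly left of `p`, and a path from column `p` to row `j`
passes through a column-to-row edge from a column weakly after `p` to a row weakly before `j`.
Neither bound can hold for a closed path.
-/

namespace Relation

variable {α : Type*} [Fintype α]

open Classical in
noncomputable def numAncestors (r : α → α → Prop) (x : α) : ℕ :=
  (Finset.univ.filter fun y => TransGen r y x).card

theorem numAncestors_lt_numAncestors {r : α → α → Prop} (hr : ∀ x, ¬ TransGen r x x)
    {x y : α} (h : TransGen r x y) : numAncestors r x < numAncestors r y := by
  classical
  refine Finset.card_lt_card ⟨fun z hz => ?_, fun hsub => ?_⟩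
  · simp only [Finset.mem_filter, Finset.mem_univ, true_and] at hz ⊢
    exact hz.trans h
  · have hx := hsub (Finset.mem_filter.2 ⟨Finset.mem_univ x, h⟩)
    exact hr x (Finset.mem_filter.1 hx).2

end Relation

section StickOrder

variable {n m : ℕ} {N : Fin n → Fin m → Bool}

theorem StickOrder.apply_eq_true (h : StickOrder N) {i j k : Fin n} {p q r : Fin m}
    (hkp : N k p = true) (hjk : j ≤ k) (hpq : p ≤ q)
    (hjr : N j r = true) (hqr : q ≤ r) (hiq : N i q = true) (hij : i ≤ j) :
    N j q = true := by
  obtain ⟨ra, rb, hra, hrb, -, hN⟩ := h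
  refine (hN j q).2 ⟨?_, ⟨r, hqr, hjr⟩, ⟨i, hij, hiq⟩⟩
  calc ra j ≤ ra k := hra.monotone hjk
    _ < rb p := ((hN k p).1 hkp).1
    _ ≤ rb q := hrb.monotone hpq

theorem StickOrder.not_P1 (h : StickOrder N) : ¬ P1 N := by
  rintro ⟨i, j, k, hij, hjk, p, q, r, hpq, hqr, hiq, hjq, hjr, hkp⟩
  simp [h.apply_eq_true hkp hjk.le hpq.le hjr hqr.le hiq hij.le] at hjq

theorem StickOrder.not_P2 (h : StickOrder N) : ¬ P2 N := by
  rintro ⟨i, j, k, hij, hjk, p, q, hpq, hip, hjp, hjq, hkp⟩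
  simp [h.apply_eq_true hkp hjk.le le_rfl hjq hpq.le hip hij.le] at hjp

theorem StickOrder.not_P3 (h : StickOrder N) : ¬ P3 N := by
  rintro ⟨i, j, hij, p, q, r, hpq, hqr, hiq, hjp, hjq, hjr⟩
  simp [h.apply_eq_true hjp le_rfl hpq.le hjr hqr.le hiq hij.le] at hjq

end StickOrder

section Patterns

variable {n m : ℕ}

def PatternFree (N : Fin n → Fin m → Bool) : Prop :=
  ¬ P1 N ∧ ¬ P2 N ∧ ¬ P3 N

theorem StickOrder.patternFree {N : Fin n → Fin m → Bool} (h : StickOrder N) :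
    PatternFree N :=
  ⟨h.not_P1, h.not_P2, h.not_P3⟩

def HEdgeBound (N : Fin n → Fin m → Bool) : Fin n ⊕ Fin m → Fin n ⊕ Fin m → Prop
  | Sum.inl j, Sum.inl j' => j < j'
  | Sum.inr p, Sum.inr p' => p < p'
  | Sum.inl j, Sum.inr p => ∃ j', j ≤ j' ∧ ∃ p', p' ≤ p ∧ N j' p' = true
  | Sum.inr p, Sum.inl j => ∃ p', p ≤ p' ∧ ∃ j', j' ≤ j ∧ HEdge N (Sum.inr p') (Sum.inl j')

theorem hEdgeBound_of_hEdge {N : Fin n → Fin m → Bool} {x y : Fin n ⊕ Fin m}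
    (h : HEdge N x y) : HEdgeBound N x y := by
  rcases x with j | p <;> rcases y with j' | p'
  exacts [h, ⟨j, le_rfl, p', le_rfl, h⟩, ⟨p, le_rfl, j', le_rfl, h⟩, h]

namespace PatternFree

variable {N : Fin n → Fin m → Bool} (hN : PatternFree N)
include hN

theorem lt_of_apply_of_hEdge {j j' : Fin n} {p p' : Fin m} (hjp : N j p = true) (hpp' : p ≤ p')
    (hS : HEdge N (Sum.inr p') (Sum.inl j')) : j < j' := by
  obtain ⟨i, hij', q, hp'q, hip', hj'p', hj'q⟩ := hS
  by_contra! hj'j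
  rcases hpp'.lt_or_eq with hpp' | rfl
  · rcases hj'j.lt_or_eq with hj'j | rfl
    · exact hN.1 ⟨_, _, _, hij', hj'j, _, _, _, hpp', hp'q, hip', hj'p', hj'q, hjp⟩
    · exact hN.2.2 ⟨_, _, hij', _, _, _, hpp', hp'q, hip', hjp, hj'p', hj'q⟩
  · have hj'j : j' < j := hj'j.lt_of_ne (by rintro rfl; simp [hjp] at hj'p')
    exact hN.2.1 ⟨_, _, _, hij', hj'j, _, _, hp'q, hip', hj'p', hj'q, hjp⟩

theorem lt_of_hEdge_of_apply {j j' : Fin n} {p p' : Fin m}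
    (hS : HEdge N (Sum.inr p) (Sum.inl j)) (hjj' : j ≤ j') (hj'p' : N j' p' = true) : p < p' := by
  obtain ⟨i, hij, q, hpq, hip, hjp, hjq⟩ := hS
  by_contra! hp'p
  rcases hjj'.lt_or_eq with hjj' | rfl
  · rcases hp'p.lt_or_eq with hp'p | rfl
    · exact hN.1 ⟨_, _, _, hij, hjj', _, _, _, hp'p, hpq, hip, hjp, hjq, hj'p'⟩
    · exact hN.2.1 ⟨_, _, _, hij, hjj', _, _, hpq, hip, hjp, hjq, hj'p'⟩
  · have hp'p : p' < p := hp'p.lt_of_ne (by rintro rfl; simp [hj'p'] at hjp)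
    exact hN.2.2 ⟨_, _, hij, _, _, _, hp'p, hpq, hip, hj'p', hjp, hjq⟩

theorem hEdgeBound_trans_hEdge {x y z : Fin n ⊕ Fin m} (hxy : HEdgeBound N x y)
    (hyz : HEdge N y z) : HEdgeBound N x z := by
  rcases x with j | p <;> rcases y with j' | p' <;> rcases z with j'' | p''
  · exact lt_trans hxy hyz
  · exact ⟨j', hxy.le, p'', le_rfl, hyz⟩
  · obtain ⟨j₁, hjj₁, p₁, hp₁p', hj₁p₁⟩ := hxy
    exact hjj₁.trans_lt (hN.lt_of_apply_of_hEdge hj₁p₁ hp₁p' hyz)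
  · obtain ⟨j₁, hjj₁, p₁, hp₁p', hj₁p₁⟩ := hxy
    exact ⟨j₁, hjj₁, p₁, hp₁p'.trans hyz.le, hj₁p₁⟩
  · obtain ⟨p₁, hpp₁, j₁, hj₁j', hS⟩ := hxy
    exact ⟨p₁, hpp₁, j₁, hj₁j'.trans hyz.le, hS⟩
  · obtain ⟨p₁, hpp₁, j₁, hj₁j', hS⟩ := hxy
    exact hpp₁.trans_lt (hN.lt_of_hEdge_of_apply hS hj₁j' hyz)
  · exact ⟨p', hxy.le, j'', le_rfl, hyz⟩
  · exact lt_trans hxy hyz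

theorem hEdgeBound_of_transGen {x y : Fin n ⊕ Fin m} (h : Relation.TransGen (HEdge N) x y) :
    HEdgeBound N x y := by
  induction h with
  | single h => exact hEdgeBound_of_hEdge h
  | tail _ h ih => exact hN.hEdgeBound_trans_hEdge ih h

theorem not_transGen_hEdge_self (x : Fin n ⊕ Fin m) : ¬ Relation.TransGen (HEdge N) x x := by
  intro hx
  have hbound := hN.hEdgeBound_of_transGen hx
  rcases x with j | p
  exacts [lt_irrefl j hbound, lt_irrefl p hbound]

theorem stickOrder : StickOrder N := by
  set rank := Relation.numAncestors (HEdge N)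
  have hlt (x y) (hxy : HEdge N x y) : rank x < rank y :=
    Relation.numAncestors_lt_numAncestors hN.not_transGen_hEdge_self (.single hxy)
  -- rows at even and columns at odd positions, so that no two coincide
  refine ⟨fun j => 2 * rank (.inl j), fun p => 2 * rank (.inr p) + 1, fun j j' hjj' => ?_,
    fun p p' hpp' => ?_, fun j p => ?_, fun j p => ⟨fun hjp => ?_, ?_⟩⟩ <;> dsimp only
  · have := hlt (.inl j) (.inl j') hjj'
    omega
  · have := hlt (.inr p) (.inr p') hpp'
    omega
  · omega
  · have := hlt (.inl j) (.inr p) hjp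
    exact ⟨by omega, ⟨p, le_rfl, hjp⟩, ⟨j, le_rfl, hjp⟩⟩
  · rintro ⟨hjp, ⟨q, hpq, hjq⟩, ⟨i, hij, hip⟩⟩
    by_contra hjp'
    rw [Bool.not_eq_true] at hjp'
    have hij : i < j := hij.lt_of_ne (by rintro rfl; simp [hip] at hjp')
    have hpq : p < q := hpq.lt_of_ne (by rintro rfl; simp [hjq] at hjp')
    have := hlt (.inr p) (.inl j) ⟨i, hij, q, hpq, hip, hjp', hjq⟩
    omega

end PatternFree

end Patterns

theorem stmt_8 {n m : ℕ} (M : Fin n → Fin m → Bool) :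
    (∃ (σ : Equiv.Perm (Fin n)) (τ : Equiv.Perm (Fin m)),
        StickOrder (fun i p => M (σ i) (τ p))) ↔
    (∃ (σ : Equiv.Perm (Fin n)) (τ : Equiv.Perm (Fin m)),
        ¬ P1 (fun i p => M (σ i) (τ p)) ∧ ¬ P2 (fun i p => M (σ i) (τ p)) ∧
        ¬ P3 (fun i p => M (σ i) (τ p))) :=
  ⟨fun ⟨σ, τ, h⟩ => ⟨σ, τ, h.patternFree⟩, fun ⟨σ, τ, h⟩ => ⟨σ, τ, PatternFree.stickOrder h⟩⟩
end

section
/- Matrices with at most 3 rows are always Stick-orderable after permuting columns: Let M : Fin n → Fin m → Bool with n ≤ 3. Then there exists a permutation τ of Fin m such that the matrix M' i p := M i (τ p) contains none of the patterns P1, P2, P3. (Hence any bipartite graph with |A| ≤ 3 has a Stick representation respecting any given ordering of A.) -/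
/-- bit of the matrix at row `i` (as a natural number), defaulting to `false`. -/
def bitM {n m : ℕ} (M : Fin n → Fin m → Bool) (i : ℕ) (p : Fin m) : Bool :=
  if h : i < n then M ⟨i, h⟩ p else false

/-- rank of a column type `(a,b,c)`; the chosen order is
`000, 010, 110, 011, 111, 001, 101, 100`. -/
def rank3 : Bool → Bool → Bool → ℕ
  | false, false, false => 0
  | false, true,  false => 1
  | true,  true,  false => 2
  | false, true,  true  => 3
  | true,  true,  true  => 4
  | false, false, true  => 5
  | true,  false, true  => 6
  | true,  false, false => 7

lemma bitM_eq {n m : ℕ} (M : Fin n → Fin m → Bool) (i : Fin n) (p : Fin m) :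
    bitM M i.val p = M i p := by
  simp [bitM, i.isLt]

lemma rank3_b (a c : Bool) : rank3 a true c ≤ 4 := by cases a <;> cases c <;> decide

lemma rank3_anb (c : Bool) : 6 ≤ rank3 true false c := by cases c <;> decide

lemma rank3_c (a b : Bool) : 3 ≤ rank3 a b true ∧ rank3 a b true ≤ 6 := by
  cases a <;> cases b <;> decide

lemma rank3_anc (b : Bool) : rank3 true b false = 2 ∨ rank3 true b false = 7 := by
  cases b <;> decide

lemma rank3_bnc (a : Bool) : rank3 a true false ≤ 2 := by cases a <;> decide

theorem stmt_11 {n m : ℕ} (M : Fin n → Fin m → Bool) (hn : n ≤ 3) :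
    ∃ τ : Equiv.Perm (Fin m),
      ¬ P1 (fun i p => M i (τ p)) ∧ ¬ P2 (fun i p => M i (τ p)) ∧
      ¬ P3 (fun i p => M i (τ p)) := by
  classical
  set key : Fin m → ℕ := fun p => rank3 (bitM M 0 p) (bitM M 1 p) (bitM M 2 p) with hkey
  set σ := Tuple.sort key with hσ
  have mono : ∀ {p q : Fin m}, p ≤ q →
      rank3 (bitM M 0 (σ p)) (bitM M 1 (σ p)) (bitM M 2 (σ p)) ≤
      rank3 (bitM M 0 (σ q)) (bitM M 1 (σ q)) (bitM M 2 (σ q)) :=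
    fun h => Tuple.monotone_sort key h
  refine ⟨σ, ?_, ?_, ?_⟩
  · rintro ⟨i, j, k, hij, hjk, p, q, r, hpq, hqr, h1, h2, h3, h4⟩
    simp only at h1 h2 h3 h4
    have hij' : i.val < j.val := hij
    have hjk' : j.val < k.val := hjk
    have hk := k.isLt
    have hi0 : i.val = 0 := by omega
    have hj1 : j.val = 1 := by omega
    have e1 : bitM M 0 (σ q) = true := by rw [← hi0, bitM_eq]; exact h1
    have e2 : bitM M 1 (σ q) = false := by rw [← hj1, bitM_eq]; exact h2
    have e3 : bitM M 1 (σ r) = true := by rw [← hj1, bitM_eq]; exact h3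
    have hm := mono hqr.le
    rw [e1, e2, e3] at hm
    have := rank3_anb (bitM M 2 (σ q))
    have := rank3_b (bitM M 0 (σ r)) (bitM M 2 (σ r))
    omega
  · rintro ⟨i, j, k, hij, hjk, p, q, hpq, h1, h2, h3, h4⟩
    simp only at h1 h2 h3 h4
    have hij' : i.val < j.val := hij
    have hjk' : j.val < k.val := hjk
    have hk := k.isLt
    have hi0 : i.val = 0 := by omega
    have hj1 : j.val = 1 := by omega
    have e1 : bitM M 0 (σ p) = true := by rw [← hi0, bitM_eq]; exact h1
    have e2 : bitM M 1 (σ p) = false := by rw [← hj1, bitM_eq]; exact h2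
    have e3 : bitM M 1 (σ q) = true := by rw [← hj1, bitM_eq]; exact h3
    have hm := mono hpq.le
    rw [e1, e2, e3] at hm
    have := rank3_anb (bitM M 2 (σ p))
    have := rank3_b (bitM M 0 (σ q)) (bitM M 2 (σ q))
    omega
  · rintro ⟨i, j, hij, p, q, r, hpq, hqr, h1, h2, h3, h4⟩
    simp only at h1 h2 h3 h4
    have hij' : i.val < j.val := hij
    have hj := j.isLt
    have hmpq := mono hpq.le
    have hmqr := mono hqr.le
    have hjc : j.val = 1 ∨ j.val = 2 := by omega
    rcases hjc with hjv | hjv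
    · -- j.val = 1, so i.val = 0
      have hi0 : i.val = 0 := by omega
      have e1 : bitM M 0 (σ q) = true := by rw [← hi0, bitM_eq]; exact h1
      have e2 : bitM M 1 (σ q) = false := by rw [← hjv, bitM_eq]; exact h3
      have e3 : bitM M 1 (σ r) = true := by rw [← hjv, bitM_eq]; exact h4
      rw [e1, e2, e3] at hmqr
      have := rank3_anb (bitM M 2 (σ q))
      have := rank3_b (bitM M 0 (σ r)) (bitM M 2 (σ r))
      omega
    · -- j.val = 2
      have e2 : bitM M 2 (σ p) = true := by rw [← hjv, bitM_eq]; exact h2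
      have e3 : bitM M 2 (σ q) = false := by rw [← hjv, bitM_eq]; exact h3
      have e4 : bitM M 2 (σ r) = true := by rw [← hjv, bitM_eq]; exact h4
      have hcp := rank3_c (bitM M 0 (σ p)) (bitM M 1 (σ p))
      have hcr := rank3_c (bitM M 0 (σ r)) (bitM M 1 (σ r))
      rw [e2, e3] at hmpq
      rw [e3, e4] at hmqr
      have hic : i.val = 0 ∨ i.val = 1 := by omega
      rcases hic with hiv | hiv
      · -- i.val = 0 : column q has a = true, c = false
        have e1 : bitM M 0 (σ q) = true := by rw [← hiv, bitM_eq]; exact h1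
        rw [e1] at hmpq hmqr
        have := rank3_anc (bitM M 1 (σ q))
        omega
      · -- i.val = 1 : column q has b = true, c = false
        have e1 : bitM M 1 (σ q) = true := by rw [← hiv, bitM_eq]; exact h1
        rw [e1] at hmpq
        have := rank3_bnc (bitM M 0 (σ q))
        omega
end

section
/- Obstruction with fixed rows (Remark on StickfA): Let M : Fin 4 → Fin 2 → Bool satisfy M 0 0 = true, M 1 0 = false, M 1 1 = true, M 2 0 = true, M 2 1 = false, M 3 1 = true (the entries M 0 1 and M 3 0 arbitrary). Then for neither of the two column orders does the resulting matrix avoid patterns P2 and P3; consequently there is no Stick order for M and no Stick order for the column-swapped matrix M' i p := M i (1 - p). -/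
/-! In a Stick order, the ones `M i p` and `M k p` of a `P2` pattern give `ra j < ra k < rb p`;
together with the one `M j q` right of column `p` and the one `M i p` above row `j`, the
defining equivalence then forces `M j p = true`, which the pattern forbids. The matrix `M`
contains `P2` on rows `0, 1, 2`, and its column swap contains `P2` on rows `1, 2, 3`. -/

theorem not_stickOrder_of_P2 {n m : ℕ} {M : Fin n → Fin m → Bool} (hM : P2 M) :
    ¬ StickOrder M := by
  obtain ⟨i, j, k, hij, hjk, p, q, hpq, hip, hjp, hjq, hkp⟩ := hM
  rintro ⟨ra, rb, hra, -, -, hiff⟩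
  have hkp_lt : ra k < rb p := ((hiff k p).mp hkp).1
  have hjp_true : M j p = true :=
    (hiff j p).mpr ⟨(hra hjk).trans hkp_lt, ⟨q, hpq.le, hjq⟩, ⟨i, hij.le, hip⟩⟩
  simp [hjp] at hjp_true

theorem stmt_12 (M : Fin 4 → Fin 2 → Bool)
    (h00 : M 0 0 = true) (h10 : M 1 0 = false) (h11 : M 1 1 = true)
    (h20 : M 2 0 = true) (h21 : M 2 1 = false) (h31 : M 3 1 = true) :
    (P2 M ∨ P3 M) ∧ (P2 (fun i p => M i (1 - p)) ∨ P3 (fun i p => M i (1 - p))) ∧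
    ¬ StickOrder M ∧ ¬ StickOrder (fun i p => M i (1 - p)) := by
  have hP2 : P2 M := ⟨0, 1, 2, by decide, by decide, 0, 1, by decide, h00, h10, h11, h20⟩
  have hP2_swap : P2 (fun i p => M i (1 - p)) :=
    ⟨1, 2, 3, by decide, by decide, 0, 1, by decide, h11, h21, h20, h31⟩
  exact ⟨Or.inl hP2, Or.inl hP2_swap, not_stickOrder_of_P2 hP2, not_stickOrder_of_P2 hP2_swap⟩
end

section
/- K_{4,4} minus a perfect matching is not a Stick graph: Let M : Fin 4 → Fin 4 → Bool with M i p = true ↔ i ≠ p (zeros exactly on the diagonal). Then for every pair of permutations σ, τ of Fin 4, the permuted matrix M' i p := M (σ i) (τ p) contains at least one of the patterns P1, P2, P3; equivalently, no permuted version of M admits a Stick order. -/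
theorem no_stick_of_pat {n m : ℕ} {M : Fin n → Fin m → Bool}
    (h : P1 M ∨ P2 M ∨ P3 M) : ¬ StickOrder M := by
  rintro ⟨ra, rb, hra, hrb, _, hchar⟩
  rcases h with ⟨i,j,k,hij,hjk,p,q,r,hpq,hqr,hiq,hjq,hjr,hkp⟩ |
    ⟨i,j,k,hij,hjk,p,q,hpq,hip,hjp,hjq,hkp⟩ |
    ⟨i,j,hij,p,q,r,hpq,hqr,hiq,hjp,hjq,hjr⟩
  · have h1 : ra k < rb p := ((hchar k p).mp hkp).1
    have h2 : ¬ (ra j < rb q) := by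
      intro hlt
      have : M j q = true := (hchar j q).mpr
        ⟨hlt, ⟨r, le_of_lt hqr, hjr⟩, ⟨i, le_of_lt hij, hiq⟩⟩
      simp [this] at hjq
    exact h2 (lt_trans (lt_trans (hra hjk) h1) (hrb hpq))
  · have h1 : ra k < rb p := ((hchar k p).mp hkp).1
    have h2 : ¬ (ra j < rb p) := by
      intro hlt
      have : M j p = true := (hchar j p).mpr
        ⟨hlt, ⟨q, le_of_lt hpq, hjq⟩, ⟨i, le_of_lt hij, hip⟩⟩
      simp [this] at hjp
    exact h2 (lt_trans (hra hjk) h1)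
  · have h1 : ra j < rb p := ((hchar j p).mp hjp).1
    have h2 : ¬ (ra j < rb q) := by
      intro hlt
      have : M j q = true := (hchar j q).mpr
        ⟨hlt, ⟨r, le_of_lt hqr, hjr⟩, ⟨i, le_of_lt hij, hiq⟩⟩
      simp [this] at hjq
    exact h2 (lt_trans h1 (hrb hpq))

set_option maxRecDepth 4000 in
theorem stmt_13 (M : Fin 4 → Fin 4 → Bool)
    (hM : ∀ i p, M i p = true ↔ i ≠ p) :
    ∀ (σ τ : Equiv.Perm (Fin 4)),
      (P1 (fun i p => M (σ i) (τ p)) ∨ P2 (fun i p => M (σ i) (τ p)) ∨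
        P3 (fun i p => M (σ i) (τ p))) ∧
      ¬ StickOrder (fun i p => M (σ i) (τ p)) := by
  have hMeq : M = fun i p => decide (i ≠ p) := by
    funext i p
    by_cases h : i = p
    · simp [h, Bool.eq_false_iff, hM]
    · simp [h, (hM i p).mpr h]
  subst hMeq
  intro σ τ
  have key : ∀ f : Fin 4 → Fin 4, Function.Injective f →
      P1 (fun i p => decide (f i ≠ p)) ∨ P2 (fun i p => decide (f i ≠ p)) ∨
      P3 (fun i p => decide (f i ≠ p)) := by
    unfold P1 P2 P3; decide
  have hpat := key (fun i => τ.symm (σ i)) (τ.symm.injective.comp σ.injective)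
  have hfun : (fun i p => decide (τ.symm (σ i) ≠ p)) =
      (fun i p => decide (σ i ≠ τ p)) := by
    funext i p
    apply decide_eq_decide.mpr
    rw [Ne, Ne, Equiv.symm_apply_eq]
  rw [hfun] at hpat
  exact ⟨hpat, no_stick_of_pat hpat⟩
end

section
/- For every permutation of the rows of the 4×4 matrix with zeros exactly on the diagonal and ones elsewhere, there exist two columns whose restriction to the permuted rows realizes (up to choosing which of the two columns is first) the column-unordered pattern [[1,*],[0,1],[1,0],[*,1]]: i.e., for each permutation σ of Fin 4 there exist distinct columns p, q such that, writing N i = M (σ i), one has N 1 p = false, N 1 q = true, N 2 p = true, N 2 q = false, and both N 0 p = true and N 3 q = true. -/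
section OffDiagonal

variable {α : Type*} {M : α → α → Bool}

theorem eq_false_iff_eq_of_offDiagonal (hM : ∀ i p, M i p = true ↔ i ≠ p) {i p : α} :
    M i p = false ↔ i = p := by
  rw [← Bool.not_eq_true, hM, not_not]

theorem exists_cols_of_offDiagonal (hM : ∀ i p, M i p = true ↔ i ≠ p) {a b c d : α}
    (hab : a ≠ b) (hbc : b ≠ c) (hdc : d ≠ c) :
    ∃ p q : α, p ≠ q ∧ M b p = false ∧ M b q = true ∧ M c p = true ∧ M c q = false ∧
      M a p = true ∧ M d q = true :=
  ⟨b, c, hbc, (eq_false_iff_eq_of_offDiagonal hM).2 rfl, (hM _ _).2 hbc,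
    (hM _ _).2 hbc.symm, (eq_false_iff_eq_of_offDiagonal hM).2 rfl, (hM _ _).2 hab,
    (hM _ _).2 hdc⟩

end OffDiagonal

theorem stmt_14 (M : Fin 4 → Fin 4 → Bool)
    (hM : ∀ i p, M i p = true ↔ i ≠ p) :
    ∀ σ : Equiv.Perm (Fin 4), ∃ p q : Fin 4, p ≠ q ∧
      M (σ 1) p = false ∧ M (σ 1) q = true ∧
      M (σ 2) p = true ∧ M (σ 2) q = false ∧
      M (σ 0) p = true ∧ M (σ 3) q = true := fun σ =>
  exists_cols_of_offDiagonal hM (σ.injective.ne (by decide)) (σ.injective.ne (by decide))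
    (σ.injective.ne (by decide))
end

section
/- P2 and P3 are the degenerate cases of P1: for any matrix M : Fin n → Fin m → Bool, if M contains pattern P2 (∃ i<j<k, p<q with M i p = true, M j p = false, M j q = true, M k p = true) or pattern P3 (∃ i<j, p<q<r with M i q = true, M j p = true, M j q = false, M j r = true), then the constraint digraph H of M (edges inl i → inl i' for i<i'; inr p → inr p' for p<p'; inl i → inr p when M i p = true; inr p → inl j when ∃ i<j, ∃ q>p with M i p = true, M j p = false, M j q = true) has a directed cycle of length exactly 3 through vertices of both sides. -/
def HasMixedTriangle {n m : ℕ} (M : Fin n → Fin m → Bool) : Prop :=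
  ∃ v₁ v₂ v₃ : Fin n ⊕ Fin m,
    HEdge M v₁ v₂ ∧ HEdge M v₂ v₃ ∧ HEdge M v₃ v₁ ∧
    (v₁.isLeft ∨ v₂.isLeft ∨ v₃.isLeft) ∧
    (v₁.isRight ∨ v₂.isRight ∨ v₃.isRight)

section

variable {n m : ℕ} {M : Fin n → Fin m → Bool}

theorem P2.hasMixedTriangle (h : P2 M) : HasMixedTriangle M := by
  obtain ⟨i, j, k, hij, hjk, p, q, hpq, hip, hjp, hjq, hkp⟩ := h
  exact ⟨.inr p, .inl j, .inl k, ⟨i, hij, q, hpq, hip, hjp, hjq⟩, hjk, hkp,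
    .inr (.inl rfl), .inl rfl⟩

theorem P3.hasMixedTriangle (h : P3 M) : HasMixedTriangle M := by
  obtain ⟨i, j, hij, p, q, r, hpq, hqr, hiq, hjp, hjq, hjr⟩ := h
  exact ⟨.inr q, .inl j, .inr p, ⟨i, hij, r, hqr, hiq, hjq, hjr⟩, hjp, hpq,
    .inr (.inl rfl), .inl rfl⟩

end

theorem stmt_18 {n m : ℕ} (M : Fin n → Fin m → Bool)
    (h : P2 M ∨ P3 M) :
    ∃ v₁ v₂ v₃ : Fin n ⊕ Fin m,
      HEdge M v₁ v₂ ∧ HEdge M v₂ v₃ ∧ HEdge M v₃ v₁ ∧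
      (v₁.isLeft ∨ v₂.isLeft ∨ v₃.isLeft) ∧
      (v₁.isRight ∨ v₂.isRight ∨ v₃.isRight) :=
  h.elim P2.hasMixedTriangle P3.hasMixedTriangle
end
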